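/- Let k ≥ 1 and let λ, μ, ν be partitions with at most k parts. If T is a semistandard set-valued tableau of shape ν with content (λ₁, …, λ_k, μ₁, …, μ_k) such that the restricted word row(T)|_[1,k] is ballot, then for each i ∈ {1, …, k} the value i occurs in T exactly in the first λ_i boxes of row i: each of the boxes (i,1), …, (i,λ_i) contains i as an element, and no other box of T contains i. In particular λ ⊆ ν. -/

import Mathlib

open Set

/-- `f` encodes a partition: a weakly decreasing, eventually zero sequence of
nonnegative integers; `f i` is the (0-indexed) `i`-th part. -/
def IsPartition (f : ℕ → ℕ) : Prop :=
  (∀ i j, i ≤ j → f j ≤ f i) ∧ ∃ N, ∀ i, N ≤ i → f i = 0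

/-- The Young diagram of `f`, as a set of (row, column) boxes, both 0-indexed. -/
def cells (f : ℕ → ℕ) : Set (ℕ × ℕ) := {p | p.2 < f p.1}

/-- The skew diagram ν/λ. -/
def skewCells (lam nu : ℕ → ℕ) : Set (ℕ × ℕ) := {p | lam p.1 ≤ p.2 ∧ p.2 < nu p.1}

/-- `lam'` is obtained from `lam` by removing a (possibly empty) set of inner
corners of `lam`: in each row either nothing happens, or the last box of the
row is removed and that box is an inner corner of `lam`. -/
def RemoveInnerCorners (lam lam' : ℕ → ℕ) : Prop :=
  ∀ i, lam' i = lam i ∨ (lam' i + 1 = lam i ∧ lam (i + 1) < lam i)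

/-- `mu'` is obtained from `mu` by adding a (possibly empty) set of outer
corners of `mu`. -/
def AddOuterCorners (mu mu' : ℕ → ℕ) : Prop :=
  ∀ i, mu' i = mu i ∨ (mu' i = mu i + 1 ∧ (i = 0 ∨ mu i < mu (i - 1)))

/-- The number of rows of the diagram of `f` (for a partition: the number of
nonzero parts). -/
noncomputable def numParts (f : ℕ → ℕ) : ℕ := sInf {N | ∀ i, N ≤ i → f i = 0}

/-- The conjugate (transpose) partition. -/
noncomputable def conjPart (f : ℕ → ℕ) : ℕ → ℕ := fun j => {i | j < f i}.ncard

/-- The shape μ⊕λ : the diagram of λ shifted `μ 0` columns to the right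
(occupying the top rows), with the diagram of μ below it (starting in row
`numParts λ`), to the lower left. -/
noncomputable def oplusShape (mu lam : ℕ → ℕ) : Set (ℕ × ℕ) :=
  {p | (mu 0 ≤ p.2 ∧ p.2 < mu 0 + lam p.1) ∨
       (numParts lam ≤ p.1 ∧ p.2 < mu (p.1 - numParts lam))}

/-- A set-valued filling of shape `D`: every box of `D` carries a nonempty
finite set of positive integers, and boxes off `D` carry `∅`. -/
def IsSVT (D : Set (ℕ × ℕ)) (T : ℕ × ℕ → Finset ℕ) : Prop :=
  (∀ p ∈ D, (T p).Nonempty ∧ ∀ v ∈ T p, 1 ≤ v) ∧ ∀ p, p ∉ D → T p = ∅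

/-- Semistandardness for set-valued tableaux: weakly increasing along rows
(max of a box ≤ min of the box to its right), strictly increasing down
columns. -/
def IsSemistandardSVT (D : Set (ℕ × ℕ)) (T : ℕ × ℕ → Finset ℕ) : Prop :=
  (∀ r c, (r, c) ∈ D → (r, c + 1) ∈ D → ∀ a ∈ T (r, c), ∀ b ∈ T (r, c + 1), a ≤ b) ∧
  (∀ r c, (r, c) ∈ D → (r + 1, c) ∈ D → ∀ a ∈ T (r, c), ∀ b ∈ T (r + 1, c), a < b)

/-- `readLE o o'` : the occurrence `o = ((row, col), value)` comes weakly
before `o'` in the reverse row word: rows top to bottom, within a row right to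
left, within a box values largest to smallest. -/
def readLE (o o' : (ℕ × ℕ) × ℕ) : Prop :=
  o.1.1 < o'.1.1 ∨
    (o.1.1 = o'.1.1 ∧ (o'.1.2 < o.1.2 ∨ (o.1.2 = o'.1.2 ∧ o'.2 ≤ o.2)))

/-- The set of occurrences (letters of the reverse row word) of a set-valued
tableau: pairs (box, value in that box). -/
def svtOcc (D : Set (ℕ × ℕ)) (T : ℕ × ℕ → Finset ℕ) : Set ((ℕ × ℕ) × ℕ) :=
  {o | o.1 ∈ D ∧ o.2 ∈ T o.1}

/-- Number of occurrences of the value `v` in the initial segment of the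
reverse row word ending at the occurrence `o` (inclusive). -/
noncomputable def svtCount (D : Set (ℕ × ℕ)) (T : ℕ × ℕ → Finset ℕ)
    (o : (ℕ × ℕ) × ℕ) (v : ℕ) : ℕ :=
  {q ∈ svtOcc D T | readLE q o ∧ q.2 = v}.ncard

/-- The reverse row word of the set-valued tableau is ballot: in every initial
segment, each `v ≥ 1` occurs at least as often as `v + 1`. -/
def svtBallot (D : Set (ℕ × ℕ)) (T : ℕ × ℕ → Finset ℕ) : Prop :=
  ∀ o ∈ svtOcc D T, ∀ v, 1 ≤ v → svtCount D T o (v + 1) ≤ svtCount D T o v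

/-- The restriction `row(T)|_[a,b]` of the reverse row word to the letters in
the interval `[a,b]` (shifted down to `[1, b-a+1]`) is ballot.  Equivalently:
in every initial segment, each `v` with `a ≤ v` and `v + 1 ≤ b` occurs at
least as often as `v + 1`. -/
def svtBallotRange (D : Set (ℕ × ℕ)) (T : ℕ × ℕ → Finset ℕ) (a b : ℕ) : Prop :=
  ∀ o ∈ svtOcc D T, ∀ v, a ≤ v → v + 1 ≤ b →
    svtCount D T o (v + 1) ≤ svtCount D T o v

/-- The content of the set-valued tableau is `mu`: for every `v`, the value
`v + 1` occurs exactly `mu v` times (i.e. m_i = μ_i, 1-indexed). -/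
def svtContentEq (D : Set (ℕ × ℕ)) (T : ℕ × ℕ → Finset ℕ) (mu : ℕ → ℕ) : Prop :=
  ∀ v : ℕ, {o ∈ svtOcc D T | o.2 = v + 1}.ncard = mu v

/-- A circle tableau of shape `D`: each box of `D` carries a single entry, a
positive integer together with a circling flag; boxes off `D` carry `(0, false)`. -/
def IsCircleTab (D : Set (ℕ × ℕ)) (T : ℕ × ℕ → ℕ × Bool) : Prop :=
  (∀ p ∈ D, 1 ≤ (T p).1) ∧ ∀ p, p ∉ D → T p = (0, false)

/-- Semistandardness for circle tableaux (ignoring circles): rows weakly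
increase left to right, columns strictly increase top to bottom. -/
def IsSemistandardCT (D : Set (ℕ × ℕ)) (T : ℕ × ℕ → ℕ × Bool) : Prop :=
  (∀ r c, (r, c) ∈ D → (r, c + 1) ∈ D → (T (r, c)).1 ≤ (T (r, c + 1)).1) ∧
  (∀ r c, (r, c) ∈ D → (r + 1, c) ∈ D → (T (r, c)).1 < (T (r + 1, c)).1)

/-- Right circle condition: a circled entry is the rightmost entry of its row
with its value (ignoring circles). -/
def IsRightCT (D : Set (ℕ × ℕ)) (T : ℕ × ℕ → ℕ × Bool) : Prop :=
  ∀ r c, (r, c) ∈ D → (T (r, c)).2 = true →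
    ∀ c', c < c' → (r, c') ∈ D → (T (r, c')).1 ≠ (T (r, c)).1

/-- Left circle condition: a circled entry is the leftmost entry of its row
with its value (ignoring circles). -/
def IsLeftCT (D : Set (ℕ × ℕ)) (T : ℕ × ℕ → ℕ × Bool) : Prop :=
  ∀ r c, (r, c) ∈ D → (T (r, c)).2 = true →
    ∀ c', c' < c → (r, c') ∈ D → (T (r, c')).1 ≠ (T (r, c)).1

/-- `cellLE p q` : box `p` comes weakly before box `q` in the reverse row
reading order (rows top to bottom, within a row right to left). -/
def cellLE (p q : ℕ × ℕ) : Prop := p.1 < q.1 ∨ (p.1 = q.1 ∧ q.2 ≤ p.2)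

/-- Number of uncircled occurrences of the value `v` among the boxes weakly
before `q` in reading order. -/
noncomputable def ctCount (D : Set (ℕ × ℕ)) (T : ℕ × ℕ → ℕ × Bool)
    (q : ℕ × ℕ) (v : ℕ) : ℕ :=
  {p ∈ D | cellLE p q ∧ T p = (v, false)}.ncard

/-- Ballotness for right circle tableaux: for every initial segment of the
reverse row word, its incremented erasure (the final entry, if circled ⓘ, is
replaced by an uncircled `i+1`; all other circled entries are deleted) is a
ballot word. -/
def ctBallotInc (D : Set (ℕ × ℕ)) (T : ℕ × ℕ → ℕ × Bool) : Prop :=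
  ∀ q ∈ D, ∀ v, 1 ≤ v →
    ctCount D T q (v + 1) + (if T q = (v, true) then 1 else 0) ≤
      ctCount D T q v + (if T q = (v - 1, true) then 1 else 0)

/-- Ballotness for left circle tableaux: for every initial segment of the
reverse row word, its unincremented erasure (the final entry, if circled ⓘ, is
replaced by an uncircled `i`; all other circled entries are deleted) is a
ballot word. -/
def ctBallotUninc (D : Set (ℕ × ℕ)) (T : ℕ × ℕ → ℕ × Bool) : Prop :=
  ∀ q ∈ D, ∀ v, 1 ≤ v →
    ctCount D T q (v + 1) + (if T q = (v + 1, true) then 1 else 0) ≤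
      ctCount D T q v + (if T q = (v, true) then 1 else 0)

/-- The content of the circle tableau is `nu` (circled entries omitted). -/
def ctContentEq (D : Set (ℕ × ℕ)) (T : ℕ × ℕ → ℕ × Bool) (nu : ℕ → ℕ) : Prop :=
  ∀ v : ℕ, {p ∈ D | T p = (v + 1, false)}.ncard = nu v

/-- In a circle tableau of shape μ⊕λ, circled entries occur only in the
lower-left part μ (the rows from row `numParts λ` on). -/
def CirclesInLower (lam : ℕ → ℕ) (T : ℕ × ℕ → ℕ × Bool) : Prop :=
  ∀ p : ℕ × ℕ, (T p).2 = true → numParts lam ≤ p.1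

/-- A circle tableau of shape μ⊕λ is limited: it has no circled ⓘ in row `i`
(1-indexed) of the lower-left part μ. -/
def IsLimitedCT (lam : ℕ → ℕ) (T : ℕ × ℕ → ℕ × Bool) : Prop :=
  ∀ r c : ℕ, (T (numParts lam + r, c)).2 = true →
    (T (numParts lam + r, c)).1 ≠ r + 1

lemma downward_closed_eq_Iio {A : Set ℕ} (hfin : A.Finite)
    (hdc : ∀ c ∈ A, ∀ c', c' ≤ c → c' ∈ A) : A = Set.Iio A.ncard := by
  rcases A.eq_empty_or_nonempty with h | h
  · rw [h]; ext c; simp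
  · obtain ⟨n, hnA, hmax⟩ := Set.Finite.exists_maximalFor id A hfin h
    have hA : A = Set.Iio (n + 1) := by
      ext c
      constructor
      · intro hc
        have : c ≤ n := by
          by_contra hcn
          have := hmax (j := c) hc (by simpa using le_of_lt (by omega : n < c))
          simp at this; omega
        simpa [Set.mem_Iio] using Nat.lt_succ_of_le this
      · intro hc
        exact hdc n hnA c (by simpa [Set.mem_Iio] using Nat.lt_succ_iff.mp hc)
    have hcard : A.ncard = n + 1 := by
      rw [hA, ← Finset.coe_range, Set.ncard_coe_finset, Finset.card_range]
    rw [hcard, ← hA]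

lemma cells_finite {nu : ℕ → ℕ} (hnu : IsPartition nu) {k : ℕ}
    (hnuk : ∀ i, k ≤ i → nu i = 0) : (cells nu).Finite := by
  apply Set.Finite.subset ((Set.finite_Iio k).prod (Set.finite_Iio (nu 0)))
  rintro ⟨r, c⟩ h
  simp only [cells, mem_setOf_eq] at h
  simp only [Set.mem_prod, Set.mem_Iio]
  constructor
  · by_contra hr
    push_neg at hr
    rw [hnuk r hr] at h; omega
  · exact lt_of_lt_of_le h (hnu.1 0 r (Nat.zero_le _))

lemma svtOcc_finite {nu : ℕ → ℕ} {T : ℕ × ℕ → Finset ℕ} (hD : (cells nu).Finite) :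
    (svtOcc (cells nu) T).Finite := by
  have hsub : svtOcc (cells nu) T ⊆ ⋃ p ∈ cells nu, {p} ×ˢ (T p : Set ℕ) := by
    rintro ⟨p, v⟩ ⟨hp, hv⟩
    simp only [mem_iUnion]
    exact ⟨p, hp, by simp [hv]⟩
  exact Set.Finite.subset
    (hD.biUnion fun p _ => (Set.finite_singleton p).prod (T p).finite_toSet) hsub

lemma row_lb {nu : ℕ → ℕ} (hnu : IsPartition nu) {T : ℕ × ℕ → Finset ℕ}
    (hT : IsSVT (cells nu) T) (hss : IsSemistandardSVT (cells nu) T) :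
    ∀ r c v, (r, c) ∈ cells nu → v ∈ T (r, c) → r + 1 ≤ v := by
  intro r
  induction r with
  | zero => intro c v hp hv; exact (hT.1 _ hp).2 v hv
  | succ r ih =>
    intro c v hp hv
    have hp' : (r, c) ∈ cells nu := by
      simp only [cells, mem_setOf_eq] at hp ⊢
      exact lt_of_lt_of_le hp (hnu.1 r (r + 1) (Nat.le_succ r))
    obtain ⟨a, ha⟩ := (hT.1 _ hp').1
    have h1 := hss.2 r c hp' hp a ha v hv
    have h2 := ih c a hp' ha
    omega

/-- In a semistandard set-valued tableau of shape ν with content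
(λ₁,…,λ_k,μ₁,…,μ_k) such that `row(T)|_[1,k]` is ballot, for each i ∈ {1,…,k}
the value i occurs exactly in the first λ_i boxes of row i.  In particular
λ ⊆ ν.  (Rows, columns and parts are 0-indexed; the value `r + 1` plays the
role of i for row index `r`.) -/
theorem small_values_position (k : ℕ) (hk : 1 ≤ k) (lam mu nu : ℕ → ℕ)
    (hlam : IsPartition lam) (hmu : IsPartition mu) (hnu : IsPartition nu)
    (hlamk : ∀ i, k ≤ i → lam i = 0) (hmuk : ∀ i, k ≤ i → mu i = 0)
    (hnuk : ∀ i, k ≤ i → nu i = 0)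
    (T : ℕ × ℕ → Finset ℕ)
    (hT : IsSVT (cells nu) T) (hss : IsSemistandardSVT (cells nu) T)
    (hcont : svtContentEq (cells nu) T
      (fun v => if v < k then lam v else if v < 2 * k then mu (v - k) else 0))
    (hballot : svtBallotRange (cells nu) T 1 k) :
    (∀ r, r < k →
      (∀ c, c < lam r → c < nu r ∧ (r + 1) ∈ T (r, c)) ∧
      (∀ p : ℕ × ℕ, p ∈ cells nu → (r + 1) ∈ T p → p.1 = r ∧ p.2 < lam r)) ∧
    (∀ i, lam i ≤ nu i) := by
  have hDfin : (cells nu).Finite := cells_finite hnu hnuk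
  have hOfin : (svtOcc (cells nu) T).Finite := svtOcc_finite hDfin
  have hlb := row_lb hnu hT hss
  -- membership in cells from membership in T
  have hmemD : ∀ p : ℕ × ℕ, ∀ v, v ∈ T p → p ∈ cells nu := by
    intro p v hv
    by_contra h
    rw [hT.2 p h] at hv
    simp at hv
  have main : ∀ r, r < k →
      (∀ c, c < lam r → c < nu r ∧ (r + 1) ∈ T (r, c)) ∧
      (∀ p : ℕ × ℕ, p ∈ cells nu → (r + 1) ∈ T p → p.1 = r ∧ p.2 < lam r) := by
    intro r
    induction r using Nat.strong_induction_on with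
    | _ r ih =>
      intro hrk
      -- Step A: every occurrence of r+1 is in row r
      have hrow : ∀ p : ℕ × ℕ, p ∈ cells nu → (r + 1) ∈ T p → p.1 = r := by
        rintro ⟨r', c⟩ hp hv
        have hle : r' ≤ r := by
          have := hlb r' c (r + 1) hp hv; omega
        by_contra hne
        have hlt : r' < r := lt_of_le_of_ne hle (by simpa using hne)
        obtain ⟨s, rfl⟩ : ∃ s, r = s + 1 := ⟨r - 1, by omega⟩
        obtain ⟨IH1, IH2⟩ := ih s (by omega) (by omega)
        by_cases hcase : r' = s ∧ c + 1 < lam s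
        · obtain ⟨rfl, hc⟩ := hcase
          have h1 := IH1 (c + 1) hc
          have hbox : (r', c + 1) ∈ cells nu := by
            simpa [cells] using h1.1
          have := hss.1 r' c hp hbox (r' + 1 + 1) hv (r' + 1) h1.2
          omega
        · -- ballot contradiction at o = ((r', c), s + 1 + 1)
          have hb := hballot ((r', c), s + 1 + 1) ⟨hp, hv⟩ (s + 1) (by omega) (by omega)
          have hzero : svtCount (cells nu) T ((r', c), s + 1 + 1) (s + 1) = 0 := by
            have hempty :
                {q ∈ svtOcc (cells nu) T | readLE q ((r', c), s + 1 + 1) ∧ q.2 = s + 1} = ∅ := by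
              ext q
              simp only [mem_setOf_eq, mem_empty_iff_false, iff_false, not_and]
              rintro hq hle2 hval
              have hq2 : (s + 1) ∈ T q.1 := hval ▸ hq.2
              obtain ⟨hq1, hq3⟩ := IH2 q.1 hq.1 hq2
              have hnc : ¬ (r' = s ∧ c + 1 < lam s) := hcase
              simp only [readLE] at hle2
              omega
            rw [svtCount, hempty, Set.ncard_empty]
          have hone : 1 ≤ svtCount (cells nu) T ((r', c), s + 1 + 1) (s + 1 + 1) := by
            have hmem : (((r', c), s + 1 + 1) : (ℕ × ℕ) × ℕ) ∈
                {q ∈ svtOcc (cells nu) T | readLE q ((r', c), s + 1 + 1) ∧ q.2 = s + 1 + 1} :=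
              ⟨⟨hp, hv⟩, Or.inr ⟨rfl, Or.inr ⟨rfl, le_refl _⟩⟩, rfl⟩
            have hfin2 :
                {q ∈ svtOcc (cells nu) T | readLE q ((r', c), s + 1 + 1) ∧ q.2 = s + 1 + 1}.Finite :=
              hOfin.subset (fun q hq => hq.1)
            have hpos := (Set.ncard_pos hfin2).mpr ⟨_, hmem⟩
            rw [svtCount]
            omega
          omega
      -- Step B: downward closedness in row r
      have hdc : ∀ c, (r + 1) ∈ T (r, c) → ∀ c', c' ≤ c → (r + 1) ∈ T (r, c') := by
        intro c
        induction c with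
        | zero =>
          intro hc c' hc'
          interval_cases c'
          exact hc
        | succ c ihc =>
          intro hc c' hc'
          rcases Nat.lt_or_ge c' (c + 1) with h | h
          · have hbox1 : (r, c + 1) ∈ cells nu := hmemD _ _ hc
            have hbox : (r, c) ∈ cells nu := by
              simp only [cells, mem_setOf_eq] at hbox1 ⊢
              omega
            obtain ⟨a, ha⟩ := (hT.1 _ hbox).1
            have h1 := hss.1 r c hbox hbox1 a ha (r + 1) hc
            have h2 := hlb r c a hbox ha
            have haeq : a = r + 1 := le_antisymm h1 h2
            exact ihc (haeq ▸ ha) c' (by omega)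
          · have : c' = c + 1 := by omega
            subst this
            exact hc
      -- Step C: A = Iio (ncard A)
      set A : Set ℕ := {c | (r + 1) ∈ T (r, c)} with hA_def
      have hAfin : A.Finite := by
        apply Set.Finite.subset (Set.finite_Iio (nu r))
        intro c hc
        have := hmemD (r, c) (r + 1) hc
        simpa [cells] using this
      have hAIio : A = Set.Iio A.ncard :=
        downward_closed_eq_Iio hAfin (fun c hc c' hc' => hdc c hc c' hc')
      -- Step D: ncard A = lam r
      have himg : {o ∈ svtOcc (cells nu) T | o.2 = r + 1} =
          (fun c => (((r, c) : ℕ × ℕ), r + 1)) '' A := by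
        ext q
        constructor
        · rintro ⟨⟨hq1, hq2⟩, hq3⟩
          have hv : (r + 1) ∈ T q.1 := hq3 ▸ hq2
          have := hrow q.1 hq1 hv
          refine ⟨q.1.2, ?_, ?_⟩
          · simpa [hA_def, ← this] using hv
          · ext <;> simp [← this, hq3]
        · rintro ⟨c, hc, rfl⟩
          exact ⟨⟨hmemD _ _ hc, hc⟩, rfl⟩
      have hinj : Function.Injective (fun c : ℕ => (((r, c) : ℕ × ℕ), r + 1)) := by
        intro a b hab
        simpa using hab
      have hcardA : A.ncard = lam r := by
        have := hcont r
        simp only [hrk, if_pos] at this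
        rw [himg, Set.ncard_image_of_injective A hinj] at this
        exact this
      constructor
      · intro c hc
        have hcA : c ∈ A := by rw [hAIio, hcardA]; exact hc
        exact ⟨by simpa [cells] using hmemD (r, c) (r + 1) hcA, hcA⟩
      · intro p hp hv
        have h1 := hrow p hp hv
        have h2 : p.2 ∈ A := by
          simp only [hA_def, mem_setOf_eq]
          rw [← h1] at hv ⊢
          simpa using hv
        rw [hAIio, hcardA] at h2
        exact ⟨h1, h2⟩
  refine ⟨main, ?_⟩
  intro i
  rcases Nat.lt_or_ge i k with hik | hik
  · rcases Nat.eq_zero_or_pos (lam i) with h | h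
    · omega
    · have := ((main i hik).1 (lam i - 1) (by omega)).1
      omega
  · rw [hlamk i hik]; omega
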